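/- arXiv:2301.10415 — 2 statements merged into one kernel-verified Lean document; each statement's English description precedes it below -/
import Mathlib

section
/- If k is a C² solution of the kernel equation on D, then the function G defined on E by G(ξ,η) := k((ξ+η)/2, (ξ−η)/2) satisfies the integral equation G(ξ,η) = G0(ξ,η) + Φ_G(ξ,η) for all (ξ,η) ∈ E. -/
open MeasureTheory Set
open scoped ENNReal

noncomputable section

/-- The triangular domain `D = {(x,y) : 0 ≤ y ≤ x ≤ 1}`. -/
def Dset : Set (ℝ × ℝ) := {p : ℝ × ℝ | 0 ≤ p.2 ∧ p.2 ≤ p.1 ∧ p.1 ≤ 1}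

/-- Partial derivative in the first variable (within `D`). -/
def pd1 (K : ℝ × ℝ → ℝ) (p : ℝ × ℝ) : ℝ := fderivWithin ℝ K Dset p (1, 0)

/-- Partial derivative in the second variable (within `D`). -/
def pd2 (K : ℝ × ℝ → ℝ) (p : ℝ × ℝ) : ℝ := fderivWithin ℝ K Dset p (0, 1)

/-- `K` is a `C²` solution of the kernel equation on `D`:
(i) `k_xx - k_yy = μ k + f + ∫_y^x k(x,z) f(z,y) dz` on `D`;
(ii) `k_x(x,x) + k_y(x,x) = λ0/2`; (iii) `k_y(x,0) = 0`; (iv) `k(0,0) = 0`. -/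
def IsKernelSol (lam0 : ℝ) (c1 : ℝ → ℝ) (f : ℝ → ℝ → ℝ) (K : ℝ × ℝ → ℝ) : Prop :=
  ContDiffOn ℝ 2 K Dset ∧
  (∀ p ∈ Dset, pd1 (pd1 K) p - pd2 (pd2 K) p =
      (lam0 - c1 p.1 + c1 p.2) * K p + f p.1 p.2 + ∫ z in p.2..p.1, K (p.1, z) * f z p.2) ∧
  (∀ x ∈ Icc (0:ℝ) 1, pd1 K (x, x) + pd2 K (x, x) = lam0 / 2) ∧
  (∀ x ∈ Icc (0:ℝ) 1, pd2 K (x, 0) = 0) ∧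
  K (0, 0) = 0

/-- The transformed domain `E = {(ξ,η) : 0 ≤ η ≤ 1, η ≤ ξ ≤ 2 - η}`. -/
def Eset : Set (ℝ × ℝ) := {p : ℝ × ℝ | 0 ≤ p.2 ∧ p.2 ≤ 1 ∧ p.2 ≤ p.1 ∧ p.1 ≤ 2 - p.2}

/-- `μ̃(ξ,η) := λ0 - c1((ξ+η)/2) + c1((ξ-η)/2)`. -/
def mutld (lam0 : ℝ) (c1 : ℝ → ℝ) (xi eta : ℝ) : ℝ :=
  lam0 - c1 ((xi + eta) / 2) + c1 ((xi - eta) / 2)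

/-- The inhomogeneous term `G0` of the integral equation. -/
def Gzero (lam0 : ℝ) (f : ℝ → ℝ → ℝ) (xi eta : ℝ) : ℝ :=
  lam0 / 4 * (xi + eta)
    + (1 / 4) * (∫ tau in eta..xi, ∫ s in (0:ℝ)..eta, f ((tau + s) / 2) ((tau - s) / 2))
    + (1 / 2) * (∫ tau in (0:ℝ)..eta, ∫ s in (0:ℝ)..tau, f ((tau + s) / 2) ((tau - s) / 2))

/-- The integral operator `Φ_H`. -/
def Phi (lam0 : ℝ) (c1 : ℝ → ℝ) (f : ℝ → ℝ → ℝ) (H : ℝ → ℝ → ℝ) (xi eta : ℝ) : ℝ :=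
  (1 / 4) * (∫ tau in eta..xi, ∫ s in (0:ℝ)..eta, mutld lam0 c1 tau s * H tau s)
    + (1 / 2) * (∫ tau in (0:ℝ)..eta, ∫ s in (0:ℝ)..tau, mutld lam0 c1 tau s * H tau s)
    + (1 / 4) * (∫ z in eta..xi, ∫ s in (0:ℝ)..eta, ∫ tau in z..(z + eta - s),
        f ((tau - s) / 2) (z - (tau + s) / 2) * H tau s)
    + (1 / 2) * (∫ z in (0:ℝ)..eta, ∫ s in (0:ℝ)..z, ∫ tau in z..(2 * z - s),
        f ((tau - s) / 2) (z - (tau + s) / 2) * H tau s)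

/-!
Along the characteristic `s ↦ ((τ + s) / 2, (τ - s) / 2)` the derivative of `∂_{(1,1)} k` is
`(k_xx - k_yy) / 2`, so by (ii) `∂_{(1,1)} k` at that point is `λ0 / 2` plus half the integral in
`s` of the right-hand side `W` of (i). On the bottom edge `y = 0` this derivative is `k_x` by (iii),
so integrating it from `k(0,0) = 0` gives `k(η, 0)`, and integrating it once more along the other
characteristic from `(η, 0)` gives `G(ξ, η) = λ0 (ξ + η) / 4 + (1/4) ∫∫ W + (1/2) ∫∫ W`.
Splitting `W` into its three parts gives `G0 + Φ_G`; the nonlocal part turns into the triple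
integrals of `Φ` after a shear of the triangle of integration.

The data are only continuous on `D` and on `[0,1]`, `[0,1]²`; their Tietze extensions make all the
parametric integrals continuous, and the extensions drop out again at the end.
-/

open intervalIntegral Function

theorem ContinuousOn.exists_continuous_eqOn {X : Type*} [TopologicalSpace X] [NormalSpace X]
    {s : Set X} {g : X → ℝ} (hg : ContinuousOn g s) (hs : IsClosed s) :
    ∃ G : X → ℝ, Continuous G ∧ EqOn G g s := by
  obtain ⟨G, hG⟩ := ContinuousMap.exists_restrict_eq hs ⟨s.domRestrict g, hg.domRestrict⟩
  exact ⟨G, G.continuous, fun x hx => congrFun (congrArg ContinuousMap.toFun hG) ⟨x, hx⟩⟩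

theorem integral_fderivWithin_apply_eq_sub {E : Type*} [NormedAddCommGroup E] [NormedSpace ℝ E]
    {g : E → ℝ} {s : Set E} {γ : ℝ → E} {v : E} {a b : ℝ}
    (hg : ContDiffOn ℝ 1 g s) (hs : UniqueDiffOn ℝ s) (hγ : ∀ t, HasDerivAt γ v t)
    (hab : a ≤ b) (hmaps : MapsTo γ (Icc a b) s) :
    ∫ t in a..b, fderivWithin ℝ g s (γ t) v = g (γ b) - g (γ a) := by
  have hγc : Continuous γ := continuous_iff_continuousAt.2 fun t => (hγ t).continuousAt
  refine integral_eq_sub_of_hasDeriv_right_of_le hab (hg.continuousOn.comp hγc.continuousOn hmaps)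
    (fun t ht => ?_) ?_
  · have hgt :=
      ((hg.differentiableOn one_ne_zero) _ (hmaps (Ioo_subset_Icc_self ht))).hasFDerivWithinAt
    exact ((hgt.comp_hasDerivWithinAt t (hγ t).hasDerivWithinAt hmaps).hasDerivAt
      (Icc_mem_nhds ht.1 ht.2)).hasDerivWithinAt
  · refine ContinuousOn.intervalIntegrable ?_
    rw [uIcc_of_le hab]
    exact ((hg.continuousOn_fderivWithin hs le_rfl).clm_apply continuousOn_const).comp
      hγc.continuousOn hmaps

theorem integral_integral_triangle_swap {R : ℝ → ℝ → ℝ} (hR : Continuous (uncurry R)) {a c : ℝ}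
    (hac : a ≤ c) :
    ∫ w in a..c, ∫ τ in a..w, R τ w = ∫ τ in a..c, ∫ w in τ..c, R τ w := by
  set F : ℝ → ℝ → ℝ := fun τ w => {q : ℝ × ℝ | q.1 < q.2}.indicator (uncurry R) (τ, w)
  have hF :
      Integrable (uncurry F) ((volume.restrict (Ioc a c)).prod (volume.restrict (Ioc a c))) := by
    rw [Measure.prod_restrict]
    refine Integrable.indicator ?_ (measurableSet_lt measurable_fst measurable_snd)
    exact (hR.continuousOn.integrableOn_compact (isCompact_Icc.prod isCompact_Icc)).mono_set
      (prod_mono Ioc_subset_Icc_self Ioc_subset_Icc_self)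
  have hleft : ∀ w ∈ Ioc a c, ∫ τ in a..w, R τ w = ∫ τ in Ioc a c, F τ w := fun w hw => by
    have : ∀ τ, F τ w = (Iio w).indicator (R · w) τ := fun τ => by
      by_cases h : τ < w <;> simp [F, indicator, h]
    simp only [this, setIntegral_indicator measurableSet_Iio, integral_of_le hw.1.le,
      integral_Ioc_eq_integral_Ioo]
    rw [show Ioc a c ∩ Iio w = Ioo a w by
      ext τ
      simp only [mem_inter_iff, mem_Ioc, mem_Iio, mem_Ioo]
      exact ⟨fun h => ⟨h.1.1, h.2⟩, fun h => ⟨⟨h.1, h.2.le.trans hw.2⟩, h.2⟩⟩]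
  have hright : ∀ τ ∈ Ioc a c, ∫ w in τ..c, R τ w = ∫ w in Ioc a c, F τ w := fun τ hτ => by
    have : ∀ w, F τ w = (Ioi τ).indicator (R τ ·) w := fun w => by
      by_cases h : τ < w <;> simp [F, indicator, h]
    simp only [this, setIntegral_indicator measurableSet_Ioi, integral_of_le hτ.2, Ioc_inter_Ioi,
      max_eq_right hτ.1.le]
  rw [integral_of_le hac, integral_of_le hac, setIntegral_congr_fun measurableSet_Ioc hleft,
    setIntegral_congr_fun measurableSet_Ioc hright]
  exact integral_integral_swap (by exact hF.swap)

theorem integral_const_add_const_mul {F : ℝ → ℝ} {a b : ℝ} (hF : IntervalIntegrable F volume a b)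
    (c d : ℝ) : ∫ x in a..b, (c + d * F x) = (b - a) * c + d * ∫ x in a..b, F x := by
  rw [integral_add intervalIntegrable_const (hF.const_mul d), intervalIntegral.integral_const,
    intervalIntegral.integral_const_mul, smul_eq_mul]

theorem integral_integral_add {A B : ℝ → ℝ → ℝ} (hA : Continuous (uncurry A))
    (hB : Continuous (uncurry B)) {u : ℝ → ℝ} (hu : Continuous u) (a b : ℝ) :
    ∫ τ in a..b, ∫ s in (0:ℝ)..u τ, (A τ s + B τ s)
      = (∫ τ in a..b, ∫ s in (0:ℝ)..u τ, A τ s) + ∫ τ in a..b, ∫ s in (0:ℝ)..u τ, B τ s := by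
  rw [integral_congr fun τ _ => integral_add (Continuous.intervalIntegrable (by fun_prop) _ _)
    (Continuous.intervalIntegrable (by fun_prop) _ _)]
  exact integral_add
    ((continuous_parametric_intervalIntegral_of_continuous hA hu).intervalIntegrable _ _)
    ((continuous_parametric_intervalIntegral_of_continuous hB hu).intervalIntegrable _ _)

theorem integral_integral_shear {g : ℝ → ℝ → ℝ} (hg : Continuous (uncurry g)) {b : ℝ}
    (hb : 0 ≤ b) :
    ∫ s in 0..b, ∫ u in 0..s, g u (s - u) = ∫ σ in 0..b, ∫ u in 0..(b - σ), g u σ := by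
  have hreflect :
      ∫ σ in 0..b, ∫ u in 0..(b - σ), g u σ = ∫ w in 0..b, ∫ u in 0..w, g u (b - w) := by
    simpa using
      (integral_comp_sub_left (fun σ => ∫ u in 0..(b - σ), g u σ) b (a := 0) (b := b)).symm
  rw [hreflect, integral_integral_triangle_swap (R := fun u s => g u (s - u)) (by fun_prop) hb,
    integral_integral_triangle_swap (R := fun u w => g u (b - w)) (by fun_prop) hb]
  refine integral_congr fun u _ => ?_
  simp only [integral_comp_sub_right (g u ·), integral_comp_sub_left (g u ·), sub_self]

theorem isClosed_Dset : IsClosed Dset :=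
  (isClosed_le continuous_const continuous_snd).inter
    ((isClosed_le continuous_snd continuous_fst).inter
      (isClosed_le continuous_fst continuous_const))

theorem convex_Dset : Convex ℝ Dset := by
  rintro p ⟨hp1, hp2, hp3⟩ q ⟨hq1, hq2, hq3⟩ a b ha hb hab
  refine ⟨?_, ?_, ?_⟩ <;> simp only [Prod.smul_snd, Prod.smul_fst, Prod.fst_add, Prod.snd_add,
    smul_eq_mul] <;> nlinarith

theorem interior_Dset_nonempty : (interior Dset).Nonempty := by
  refine ⟨(1 / 2, 1 / 4), mem_interior.2 ⟨Metric.ball _ (1 / 8), fun p hp => ?_,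
    Metric.isOpen_ball, Metric.mem_ball_self (by norm_num)⟩⟩
  simp only [Metric.mem_ball, Prod.dist_eq, max_lt_iff, Real.dist_eq, abs_lt] at hp
  exact ⟨by linarith, by linarith, by linarith⟩

theorem uniqueDiffOn_Dset : UniqueDiffOn ℝ Dset :=
  uniqueDiffOn_convex convex_Dset interior_Dset_nonempty

theorem Dset_subset_closure_interior : Dset ⊆ closure (interior Dset) := by
  rw [convex_Dset.closure_interior_eq_closure_of_nonempty_interior interior_Dset_nonempty]
  exact subset_closure

theorem mk_mem_Dset {τ s : ℝ} (h0 : 0 ≤ s) (hsτ : s ≤ τ) (h2 : τ + s ≤ 2) :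
    ((τ + s) / 2, (τ - s) / 2) ∈ Dset :=
  ⟨by linarith, by linarith, by linarith⟩

section SecondDerivative

variable {K : ℝ × ℝ → ℝ} (hK : ContDiffOn ℝ 2 K Dset)
include hK

theorem fderivWithin_fderivWithin_apply {p : ℝ × ℝ} (hp : p ∈ Dset) (v w : ℝ × ℝ) :
    fderivWithin ℝ (fun q => fderivWithin ℝ K Dset q v) Dset p w
      = fderivWithin ℝ (fderivWithin ℝ K Dset) Dset p w v := by
  have hd : DifferentiableWithinAt ℝ (fderivWithin ℝ K Dset) Dset p :=
    (hK.fderivWithin (m := 1) uniqueDiffOn_Dset (by norm_num)).differentiableOn one_ne_zero p hp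
  have h : HasFDerivWithinAt (fun q => fderivWithin ℝ K Dset q v)
      ((ContinuousLinearMap.apply ℝ ℝ v).comp (fderivWithin ℝ (fderivWithin ℝ K Dset) Dset p))
      Dset p :=
    (ContinuousLinearMap.apply ℝ ℝ v).hasFDerivAt.comp_hasFDerivWithinAt p hd.hasFDerivWithinAt
  rw [h.fderivWithin (uniqueDiffOn_Dset p hp)]
  rfl

theorem fderivWithin_fderivWithin_diag_eq_wave {p : ℝ × ℝ} (hp : p ∈ Dset) :
    fderivWithin ℝ (fun q => fderivWithin ℝ K Dset q (1, 1)) Dset p (1, -1)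
      = pd1 (pd1 K) p - pd2 (pd2 K) p := by
  have hsymm := ((hK p hp).isSymmSndFDerivWithinAt (by simp) uniqueDiffOn_Dset
    (Dset_subset_closure_interior hp) hp).eq (1, 0) (0, 1)
  have h1 : ((1 : ℝ), (-1 : ℝ)) = ((1 : ℝ), (0 : ℝ)) - (0, 1) := by simp
  have h2 : ((1 : ℝ), (1 : ℝ)) = ((1 : ℝ), (0 : ℝ)) + (0, 1) := by simp
  unfold pd1 pd2
  simp only [fderivWithin_fderivWithin_apply hK hp]
  rw [h1, h2, map_sub]
  simp only [sub_apply, map_add]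
  linarith

end SecondDerivative

def goursatIntegral (W : ℝ → ℝ → ℝ) (ξ η : ℝ) : ℝ :=
  (1 / 4) * (∫ τ in η..ξ, ∫ s in (0:ℝ)..η, W τ s)
    + (1 / 2) * (∫ τ in (0:ℝ)..η, ∫ s in (0:ℝ)..τ, W τ s)

section Goursat

variable {K : ℝ × ℝ → ℝ} {lam0 : ℝ} {W : ℝ → ℝ → ℝ} (hK : ContDiffOn ℝ 2 K Dset)
include hK

theorem fderivWithin_mk_apply_one_one
    (hdiag : ∀ x ∈ Icc (0:ℝ) 1, pd1 K (x, x) + pd2 K (x, x) = lam0 / 2)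
    (hwave : ∀ τ s, 0 ≤ s → s ≤ τ → τ + s ≤ 2 →
      pd1 (pd1 K) ((τ + s) / 2, (τ - s) / 2) - pd2 (pd2 K) ((τ + s) / 2, (τ - s) / 2) = W τ s)
    {τ b : ℝ} (hb0 : 0 ≤ b) (hbτ : b ≤ τ) (hb2 : τ + b ≤ 2) :
    fderivWithin ℝ K Dset ((τ + b) / 2, (τ - b) / 2) (1, 1)
      = lam0 / 2 + (1 / 2) * ∫ s in (0:ℝ)..b, W τ s := by
  have hg : ContDiffOn ℝ 1 (fun q => fderivWithin ℝ K Dset q (1, 1)) Dset :=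
    (hK.fderivWithin (m := 1) uniqueDiffOn_Dset (by norm_num)).clm_apply contDiffOn_const
  have hγ := fun s : ℝ => (((hasDerivAt_id' s).const_add τ).div_const 2).prodMk
    (((hasDerivAt_id' s).const_sub τ).div_const 2)
  have hmaps : MapsTo (fun s : ℝ => ((τ + s) / 2, (τ - s) / 2)) (Icc 0 b) Dset :=
    fun s hs => mk_mem_Dset hs.1 (hs.2.trans hbτ) (by linarith [hs.2])
  have hftc := integral_fderivWithin_apply_eq_sub hg uniqueDiffOn_Dset hγ hb0 hmaps
  have hv : ((1 : ℝ) / 2, -(1 : ℝ) / 2) = (1 / 2 : ℝ) • ((1 : ℝ), (-1 : ℝ)) := by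
    simp only [Prod.smul_mk, smul_eq_mul]; norm_num
  have hint : ∀ s ∈ uIcc 0 b, fderivWithin ℝ (fun q => fderivWithin ℝ K Dset q (1, 1)) Dset
      ((τ + s) / 2, (τ - s) / 2) (1 / 2, -1 / 2) = (1 / 2) * W τ s := fun s hs => by
    rw [uIcc_of_le hb0] at hs
    rw [hv, map_smul, fderivWithin_fderivWithin_diag_eq_wave hK
      (mk_mem_Dset hs.1 (hs.2.trans hbτ) (by linarith [hs.2])),
      hwave τ s hs.1 (hs.2.trans hbτ) (by linarith [hs.2]), smul_eq_mul]
  have h0 : fderivWithin ℝ K Dset ((τ + 0) / 2, (τ - 0) / 2) (1, 1) = lam0 / 2 := by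
    have h := hdiag (τ / 2) ⟨by linarith, by linarith⟩
    rw [pd1, pd2, ← map_add, Prod.mk_add_mk, add_zero, zero_add] at h
    simpa using h
  rw [integral_congr hint, intervalIntegral.integral_const_mul, h0] at hftc
  linarith

theorem eq_add_integral_fderivWithin_bottom (hbot : ∀ x ∈ Icc (0:ℝ) 1, pd2 K (x, 0) = 0)
    {η : ℝ} (h0 : 0 ≤ η) (h1 : η ≤ 1) :
    K (η, 0) = K (0, 0) + ∫ τ in (0:ℝ)..η, fderivWithin ℝ K Dset (τ, 0) (1, 1) := by
  have hmaps : MapsTo (fun τ : ℝ => (τ, (0 : ℝ))) (Icc 0 η) Dset :=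
    fun τ hτ => ⟨le_rfl, hτ.1, hτ.2.trans h1⟩
  have hftc := integral_fderivWithin_apply_eq_sub (hK.of_le (by norm_num)) uniqueDiffOn_Dset
    (fun τ => (hasDerivAt_id' τ).prodMk (hasDerivAt_const τ 0)) h0 hmaps
  have hint : ∀ τ ∈ uIcc 0 η, fderivWithin ℝ K Dset (τ, 0) (1, 1)
      = fderivWithin ℝ K Dset (τ, 0) (1, 0) := fun τ hτ => by
    rw [uIcc_of_le h0] at hτ
    have h := hbot τ ⟨hτ.1, hτ.2.trans h1⟩
    rw [pd2] at h
    rw [show ((1 : ℝ), (1 : ℝ)) = (1, 0) + (0, 1) by simp, map_add, h, add_zero]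
  rw [integral_congr hint, hftc]
  simp

theorem eq_add_integral_fderivWithin_side {ξ η : ℝ} (he0 : 0 ≤ η) (hex : η ≤ ξ)
    (hx2 : ξ ≤ 2 - η) :
    K ((ξ + η) / 2, (ξ - η) / 2)
      = K (η, 0)
        + (1 / 2) * ∫ τ in η..ξ, fderivWithin ℝ K Dset ((τ + η) / 2, (τ - η) / 2) (1, 1) := by
  have hmaps : MapsTo (fun τ : ℝ => ((τ + η) / 2, (τ - η) / 2)) (Icc η ξ) Dset :=
    fun τ hτ => mk_mem_Dset he0 hτ.1 (by linarith [hτ.2])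
  have hftc := integral_fderivWithin_apply_eq_sub (hK.of_le (by norm_num)) uniqueDiffOn_Dset
    (fun τ => (((hasDerivAt_id' τ).add_const η).div_const 2).prodMk
      (((hasDerivAt_id' τ).sub_const η).div_const 2)) hex hmaps
  have hv : ((1 : ℝ) / 2, (1 : ℝ) / 2) = (1 / 2 : ℝ) • ((1 : ℝ), (1 : ℝ)) := by simp
  simp only [hv, map_smul, smul_eq_mul, intervalIntegral.integral_const_mul] at hftc
  rw [hftc]
  simp only [add_self_div_two, sub_self, zero_div]
  ring

theorem eq_goursatIntegral
    (hdiag : ∀ x ∈ Icc (0:ℝ) 1, pd1 K (x, x) + pd2 K (x, x) = lam0 / 2)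
    (hbot : ∀ x ∈ Icc (0:ℝ) 1, pd2 K (x, 0) = 0)
    (hwave : ∀ τ s, 0 ≤ s → s ≤ τ → τ + s ≤ 2 →
      pd1 (pd1 K) ((τ + s) / 2, (τ - s) / 2) - pd2 (pd2 K) ((τ + s) / 2, (τ - s) / 2) = W τ s)
    (hW : Continuous (uncurry W)) {ξ η : ℝ} (hE : (ξ, η) ∈ Eset) :
    K ((ξ + η) / 2, (ξ - η) / 2) = K (0, 0) + lam0 / 4 * (ξ + η) + goursatIntegral W ξ η := by
  obtain ⟨he0, he1, hex, hx2⟩ := hE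
  have hbottom : ∫ τ in (0:ℝ)..η, fderivWithin ℝ K Dset (τ, 0) (1, 1)
      = ∫ τ in (0:ℝ)..η, (lam0 / 2 + (1 / 2) * ∫ s in (0:ℝ)..τ, W τ s) :=
    integral_congr fun τ hτ => by
      rw [uIcc_of_le he0] at hτ
      have h := fderivWithin_mk_apply_one_one hK hdiag hwave hτ.1 le_rfl (by linarith [hτ.2])
      rwa [add_self_div_two, sub_self, zero_div] at h
  have hside : ∫ τ in η..ξ, fderivWithin ℝ K Dset ((τ + η) / 2, (τ - η) / 2) (1, 1)
      = ∫ τ in η..ξ, (lam0 / 2 + (1 / 2) * ∫ s in (0:ℝ)..η, W τ s) :=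
    integral_congr fun τ hτ => by
      rw [uIcc_of_le hex] at hτ
      exact fderivWithin_mk_apply_one_one hK hdiag hwave he0 hτ.1 (by linarith [hτ.2])
  rw [eq_add_integral_fderivWithin_side hK he0 hex hx2,
    eq_add_integral_fderivWithin_bottom hK hbot he0 he1, hbottom, hside,
    integral_const_add_const_mul ((continuous_parametric_intervalIntegral_of_continuous hW
      continuous_id').intervalIntegrable _ _),
    integral_const_add_const_mul ((continuous_parametric_intervalIntegral_of_continuous' hW _ _
      ).intervalIntegrable _ _), goursatIntegral]
  ring

end Goursat

theorem goursatIntegral_add {A B : ℝ → ℝ → ℝ} (hA : Continuous (uncurry A))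
    (hB : Continuous (uncurry B)) (ξ η : ℝ) :
    goursatIntegral (fun τ s => A τ s + B τ s) ξ η
      = goursatIntegral A ξ η + goursatIntegral B ξ η := by
  rw [goursatIntegral, integral_integral_add hA hB (u := fun _ => η) continuous_const,
    integral_integral_add hA hB (u := fun τ => τ) continuous_id', goursatIntegral, goursatIntegral]
  ring

theorem goursatIntegral_congr {A B : ℝ → ℝ → ℝ}
    (h : ∀ τ s, 0 ≤ s → s ≤ τ → τ + s ≤ 2 → A τ s = B τ s) {ξ η : ℝ} (hE : (ξ, η) ∈ Eset) :
    goursatIntegral A ξ η = goursatIntegral B ξ η := by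
  obtain ⟨he0, he1, hex, hx2⟩ := hE
  unfold goursatIntegral
  congr 2
  · refine integral_congr fun τ hτ => integral_congr fun s hs => ?_
    rw [uIcc_of_le hex] at hτ
    rw [uIcc_of_le he0] at hs
    exact h τ s hs.1 (hs.2.trans hτ.1) (by linarith [hτ.2, hs.2])
  · refine integral_congr fun τ hτ => integral_congr fun s hs => ?_
    rw [uIcc_of_le he0] at hτ
    rw [uIcc_of_le hτ.1] at hs
    exact h τ s hs.1 hs.2 (by linarith [hτ.2, hs.2])

def nonlocalTerm (Kc : ℝ × ℝ → ℝ) (Fc : ℝ → ℝ → ℝ) (τ s : ℝ) : ℝ :=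
  ∫ z in (τ - s) / 2..(τ + s) / 2, Kc ((τ + s) / 2, z) * Fc z ((τ - s) / 2)

theorem nonlocalTerm_eq_integral (Kc : ℝ × ℝ → ℝ) (Fc : ℝ → ℝ → ℝ) (τ s : ℝ) :
    nonlocalTerm Kc Fc τ s
      = ∫ u in 0..s, Kc ((τ + s) / 2, u + (τ - s) / 2) * Fc (u + (τ - s) / 2) ((τ - s) / 2) := by
  rw [integral_comp_add_right (fun z => Kc ((τ + s) / 2, z) * Fc z ((τ - s) / 2)), zero_add,
    show s + (τ - s) / 2 = (τ + s) / 2 by ring, nonlocalTerm]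

theorem continuous_nonlocalTerm {Kc : ℝ × ℝ → ℝ} {Fc : ℝ → ℝ → ℝ} (hKc : Continuous Kc)
    (hFc : Continuous (uncurry Fc)) : Continuous (uncurry (nonlocalTerm Kc Fc)) := by
  simp only [uncurry_def, nonlocalTerm_eq_integral]
  exact continuous_parametric_intervalIntegral_of_continuous (by fun_prop) continuous_snd

theorem integral_nonlocalTerm {Kc : ℝ × ℝ → ℝ} {Fc : ℝ → ℝ → ℝ} (hKc : Continuous Kc)
    (hFc : Continuous (uncurry Fc)) (t : ℝ) {b : ℝ} (hb : 0 ≤ b) :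
    ∫ s in 0..b, nonlocalTerm Kc Fc t s
      = ∫ s in 0..b, ∫ τ in t..(t + b - s),
          Fc ((τ - s) / 2) (t - (τ + s) / 2) * Kc ((τ + s) / 2, (τ - s) / 2) := by
  set Q : ℝ → ℝ → ℝ := fun τ σ => Fc ((τ - σ) / 2) (t - (τ + σ) / 2) * Kc ((τ + σ) / 2, (τ - σ) / 2)
  have hQ : Continuous (uncurry fun u σ => Q (t + u) σ) := by fun_prop
  have hshear := integral_integral_shear hQ hb
  have hinner : ∀ σ, ∫ u in 0..(b - σ), Q (t + u) σ = ∫ τ in t..(t + b - σ), Q τ σ := fun σ => by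
    rw [integral_comp_add_left (Q · σ), add_zero, add_sub_assoc]
  simp only [hinner] at hshear
  rw [← hshear]
  refine integral_congr fun s _ => ?_
  rw [nonlocalTerm_eq_integral]
  refine integral_congr fun u _ => ?_
  simp only [Q]
  ring_nf

def waveRHS (lam0 : ℝ) (Cc : ℝ → ℝ) (Fc : ℝ → ℝ → ℝ) (Kc : ℝ × ℝ → ℝ) (τ s : ℝ) : ℝ :=
  mutld lam0 Cc τ s * Kc ((τ + s) / 2, (τ - s) / 2) + Fc ((τ + s) / 2) ((τ - s) / 2)
    + nonlocalTerm Kc Fc τ s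

theorem waveRHS_eq {lam0 : ℝ} {c1 Cc : ℝ → ℝ} {f Fc : ℝ → ℝ → ℝ} {K Kc : ℝ × ℝ → ℝ}
    (hC : EqOn Cc c1 (Icc 0 1)) (hF : ∀ x ∈ Icc (0:ℝ) 1, ∀ y ∈ Icc (0:ℝ) 1, Fc x y = f x y)
    (hK : EqOn Kc K Dset) {τ s : ℝ} (h0 : 0 ≤ s) (hsτ : s ≤ τ) (h2 : τ + s ≤ 2) :
    waveRHS lam0 Cc Fc Kc τ s
      = (lam0 - c1 ((τ + s) / 2) + c1 ((τ - s) / 2)) * K ((τ + s) / 2, (τ - s) / 2)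
        + f ((τ + s) / 2) ((τ - s) / 2)
        + ∫ z in (τ - s) / 2..(τ + s) / 2, K ((τ + s) / 2, z) * f z ((τ - s) / 2) := by
  have hx : (τ + s) / 2 ∈ Icc (0:ℝ) 1 := ⟨by linarith, by linarith⟩
  have hy : (τ - s) / 2 ∈ Icc (0:ℝ) 1 := ⟨by linarith, by linarith⟩
  rw [waveRHS, mutld, nonlocalTerm, hC hx, hC hy, hK (mk_mem_Dset h0 hsτ h2), hF _ hx _ hy]
  congr 1
  refine integral_congr fun z hz => ?_
  rw [uIcc_of_le (by linarith)] at hz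
  exact congrArg₂ (· * ·) (hK ⟨hy.1.trans hz.1, hz.2, hx.2⟩)
    (hF z ⟨hy.1.trans hz.1, hz.2.trans hx.2⟩ _ hy)

theorem goursatIntegral_nonlocalTerm {Kc : ℝ × ℝ → ℝ} {Fc : ℝ → ℝ → ℝ} (hKc : Continuous Kc)
    (hFc : Continuous (uncurry Fc)) {ξ η : ℝ} (hη : 0 ≤ η) :
    goursatIntegral (nonlocalTerm Kc Fc) ξ η
      = (1 / 4) * (∫ z in η..ξ, ∫ s in (0:ℝ)..η, ∫ τ in z..(z + η - s),
          Fc ((τ - s) / 2) (z - (τ + s) / 2) * Kc ((τ + s) / 2, (τ - s) / 2))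
        + (1 / 2) * (∫ z in (0:ℝ)..η, ∫ s in (0:ℝ)..z, ∫ τ in z..(2 * z - s),
          Fc ((τ - s) / 2) (z - (τ + s) / 2) * Kc ((τ + s) / 2, (τ - s) / 2)) := by
  unfold goursatIntegral
  congr 2
  · exact integral_congr fun z _ => integral_nonlocalTerm hKc hFc z hη
  · refine integral_congr fun z hz => ?_
    rw [uIcc_of_le hη] at hz
    simp only [integral_nonlocalTerm hKc hFc z hz.1, two_mul]

theorem eq_Gzero_add_Phi {K Kc : ℝ × ℝ → ℝ} {lam0 : ℝ} {Cc : ℝ → ℝ} {Fc : ℝ → ℝ → ℝ}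
    (hCc : Continuous Cc) (hFc : Continuous (uncurry Fc)) (hKc : Continuous Kc)
    (hK : ContDiffOn ℝ 2 K Dset)
    (hdiag : ∀ x ∈ Icc (0:ℝ) 1, pd1 K (x, x) + pd2 K (x, x) = lam0 / 2)
    (hbot : ∀ x ∈ Icc (0:ℝ) 1, pd2 K (x, 0) = 0)
    (hwave : ∀ τ s, 0 ≤ s → s ≤ τ → τ + s ≤ 2 →
      pd1 (pd1 K) ((τ + s) / 2, (τ - s) / 2) - pd2 (pd2 K) ((τ + s) / 2, (τ - s) / 2)
        = waveRHS lam0 Cc Fc Kc τ s)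
    {ξ η : ℝ} (hE : (ξ, η) ∈ Eset) :
    K ((ξ + η) / 2, (ξ - η) / 2)
      = K (0, 0) + Gzero lam0 Fc ξ η
        + Phi lam0 Cc Fc (fun τ s => Kc ((τ + s) / 2, (τ - s) / 2)) ξ η := by
  have hnonlocal := continuous_nonlocalTerm hKc hFc
  have hlocal :
      Continuous (uncurry fun τ s => mutld lam0 Cc τ s * Kc ((τ + s) / 2, (τ - s) / 2)) := by
    unfold mutld; fun_prop
  have hsplit : goursatIntegral (waveRHS lam0 Cc Fc Kc) ξ η
      = goursatIntegral (fun τ s => mutld lam0 Cc τ s * Kc ((τ + s) / 2, (τ - s) / 2)) ξ η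
        + goursatIntegral (fun τ s => Fc ((τ + s) / 2) ((τ - s) / 2)) ξ η
        + goursatIntegral (nonlocalTerm Kc Fc) ξ η := by
    rw [← goursatIntegral_add hlocal (by fun_prop), ← goursatIntegral_add (by fun_prop) hnonlocal]
    rfl
  rw [eq_goursatIntegral hK hdiag hbot hwave (by unfold waveRHS; fun_prop) hE, hsplit,
    goursatIntegral_nonlocalTerm hKc hFc hE.1]
  simp only [Gzero, Phi, goursatIntegral]
  ring

section Congr

variable {f Fc : ℝ → ℝ → ℝ} (hF : ∀ x ∈ Icc (0:ℝ) 1, ∀ y ∈ Icc (0:ℝ) 1, Fc x y = f x y)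
include hF

theorem Gzero_congr (lam0 : ℝ) {ξ η : ℝ} (hE : (ξ, η) ∈ Eset) :
    Gzero lam0 Fc ξ η = Gzero lam0 f ξ η := by
  have h := goursatIntegral_congr (A := fun τ s => Fc ((τ + s) / 2) ((τ - s) / 2))
    (B := fun τ s => f ((τ + s) / 2) ((τ - s) / 2))
    (fun τ s h0 hsτ h2 => hF _ ⟨by linarith, by linarith⟩ _ ⟨by linarith, by linarith⟩) hE
  unfold goursatIntegral at h
  rw [Gzero, Gzero, add_assoc, h, ← add_assoc]

variable {H Hc : ℝ → ℝ → ℝ} (hH : ∀ τ s, 0 ≤ s → s ≤ τ → τ + s ≤ 2 → Hc τ s = H τ s)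
include hH

theorem integral_integral_nonlocal_congr {z b : ℝ} (hb : 0 ≤ b) (hbz : b ≤ z) (hzb : z + b ≤ 2) :
    ∫ s in (0:ℝ)..b, ∫ τ in z..(z + b - s), Fc ((τ - s) / 2) (z - (τ + s) / 2) * Hc τ s
      = ∫ s in (0:ℝ)..b, ∫ τ in z..(z + b - s), f ((τ - s) / 2) (z - (τ + s) / 2) * H τ s := by
  refine integral_congr fun s hs => integral_congr fun τ hτ => ?_
  rw [uIcc_of_le hb] at hs
  rw [uIcc_of_le (by linarith [hs.2])] at hτ
  exact congrArg₂ (· * ·)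
    (hF _ ⟨by linarith [hτ.1, hs.2], by linarith [hτ.2, hs.1]⟩
      _ ⟨by linarith [hτ.2], by linarith [hτ.1, hs.1]⟩)
    (hH τ s hs.1 (by linarith [hτ.1, hs.2]) (by linarith [hτ.2]))

theorem Phi_congr {lam0 : ℝ} {c1 Cc : ℝ → ℝ} (hC : EqOn Cc c1 (Icc 0 1)) {ξ η : ℝ}
    (hE : (ξ, η) ∈ Eset) :
    Phi lam0 Cc Fc Hc ξ η = Phi lam0 c1 f H ξ η := by
  have hlocal := goursatIntegral_congr (A := fun τ s => mutld lam0 Cc τ s * Hc τ s)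
    (B := fun τ s => mutld lam0 c1 τ s * H τ s) (fun τ s h0 hsτ h2 => by
      rw [mutld, mutld, hC ⟨by linarith, by linarith⟩, hC ⟨by linarith, by linarith⟩,
        hH τ s h0 hsτ h2]) hE
  unfold goursatIntegral at hlocal
  obtain ⟨he0, -, hex, hx2⟩ := hE
  have houter : ∫ z in η..ξ, ∫ s in (0:ℝ)..η, ∫ τ in z..(z + η - s),
      Fc ((τ - s) / 2) (z - (τ + s) / 2) * Hc τ s
      = ∫ z in η..ξ, ∫ s in (0:ℝ)..η, ∫ τ in z..(z + η - s),
      f ((τ - s) / 2) (z - (τ + s) / 2) * H τ s := integral_congr fun z hz => by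
    rw [uIcc_of_le hex] at hz
    exact integral_integral_nonlocal_congr hF hH he0 hz.1 (by linarith [hz.2])
  have hinner : ∫ z in (0:ℝ)..η, ∫ s in (0:ℝ)..z, ∫ τ in z..(2 * z - s),
      Fc ((τ - s) / 2) (z - (τ + s) / 2) * Hc τ s
      = ∫ z in (0:ℝ)..η, ∫ s in (0:ℝ)..z, ∫ τ in z..(2 * z - s),
      f ((τ - s) / 2) (z - (τ + s) / 2) * H τ s := integral_congr fun z hz => by
    rw [uIcc_of_le he0] at hz
    simp only [two_mul]
    exact integral_integral_nonlocal_congr hF hH hz.1 le_rfl (by linarith [hz.2])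
  rw [Phi, Phi, hlocal, houter, hinner]

end Congr

theorem kernel_solution_satisfies_integral_equation_general (lam0 : ℝ)
    (c1 : ℝ → ℝ) (hc1 : ContinuousOn c1 (Icc 0 1))
    (f : ℝ → ℝ → ℝ)
    (hf : ContinuousOn (fun p : ℝ × ℝ => f p.1 p.2) (Icc 0 1 ×ˢ Icc 0 1))
    (K : ℝ × ℝ → ℝ) (hK : IsKernelSol lam0 c1 f K) :
    ∀ xi eta : ℝ, (xi, eta) ∈ Eset →
      K ((xi + eta) / 2, (xi - eta) / 2) =
        Gzero lam0 f xi eta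
          + Phi lam0 c1 f (fun xi' eta' => K ((xi' + eta') / 2, (xi' - eta') / 2)) xi eta := by
  obtain ⟨hC2, hPDE, hdiag, hbot, hK00⟩ := hK
  intro xi eta hE
  obtain ⟨Cc, hCc, hCcEq⟩ := hc1.exists_continuous_eqOn isClosed_Icc
  obtain ⟨Fc, hFc, hFcEq⟩ := hf.exists_continuous_eqOn (isClosed_Icc.prod isClosed_Icc)
  obtain ⟨Kc, hKc, hKcEq⟩ := hC2.continuousOn.exists_continuous_eqOn isClosed_Dset
  have hF : ∀ x ∈ Icc (0:ℝ) 1, ∀ y ∈ Icc (0:ℝ) 1, curry Fc x y = f x y :=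
    fun x hx y hy => hFcEq (mk_mem_prod hx hy)
  have hwave : ∀ τ s, 0 ≤ s → s ≤ τ → τ + s ≤ 2 →
      pd1 (pd1 K) ((τ + s) / 2, (τ - s) / 2) - pd2 (pd2 K) ((τ + s) / 2, (τ - s) / 2)
        = waveRHS lam0 Cc (curry Fc) Kc τ s := fun τ s h0 hsτ h2 =>
    (hPDE _ (mk_mem_Dset h0 hsτ h2)).trans (waveRHS_eq hCcEq hF hKcEq h0 hsτ h2).symm
  rw [eq_Gzero_add_Phi hCc (by rwa [uncurry_curry]) hKc hC2 hdiag hbot hwave hE, hK00, zero_add,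
    Gzero_congr hF lam0 hE,
    Phi_congr hF (fun τ s h0 hsτ h2 => hKcEq (mk_mem_Dset h0 hsτ h2)) hCcEq hE]

/-- If `k` solves the kernel equation, then `G(ξ,η) := k((ξ+η)/2, (ξ-η)/2)` satisfies the
integral equation `G = G0 + Φ_G` on `E`. -/
theorem kernel_solution_satisfies_integral_equation (lam0 : ℝ) (hlam0 : 0 < lam0)
    (c1 : ℝ → ℝ) (hc1 : ContinuousOn c1 (Icc 0 1))
    (f : ℝ → ℝ → ℝ)
    (hf : ContinuousOn (fun p : ℝ × ℝ => f p.1 p.2) (Icc 0 1 ×ˢ Icc 0 1))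
    (K : ℝ × ℝ → ℝ) (hK : IsKernelSol lam0 c1 f K) :
    ∀ xi eta : ℝ, (xi, eta) ∈ Eset →
      K ((xi + eta) / 2, (xi - eta) / 2) =
        Gzero lam0 f xi eta
          + Phi lam0 c1 f (fun xi' eta' => K ((xi' + eta') / 2, (xi' - eta') / 2)) xi eta :=
  kernel_solution_satisfies_integral_equation_general lam0 c1 hc1 f hf K hK
end
end

section
/- For all (ξ,η) ∈ E one has |Φ_{G0}(ξ,η)| ≤ M(Λ̄ξη/4 + f̄ξη²/8 − f̄η³/24) ≤ M²(ξ+η), where M := (f̄ + Λ̄)/2. -/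
open MeasureTheory Set
open scoped ENNReal

noncomputable section

/-- `f̄ := max_{[0,1]²} |f|`. -/
def fbar (f : ℝ → ℝ → ℝ) : ℝ :=
  sSup ((fun p : ℝ × ℝ => |f p.1 p.2|) '' (Icc (0:ℝ) 1 ×ˢ Icc (0:ℝ) 1))

/-- `Λ̄ := max {λ0, max_D |λ0 - c1(x) + c1(y)|}`. -/
def Lambdabar (lam0 : ℝ) (c1 : ℝ → ℝ) : ℝ :=
  max lam0 (sSup ((fun p : ℝ × ℝ => |lam0 - c1 p.1 + c1 p.2|) '' Dset))

/-- `M := (f̄ + Λ̄)/2`. -/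
def Mconst (lam0 : ℝ) (c1 : ℝ → ℝ) (f : ℝ → ℝ → ℝ) : ℝ :=
  (fbar f + Lambdabar lam0 c1) / 2

/-!
On `E` the coefficient `μ̃` is a value of `λ0 - c1 x + c1 y` on `D`, so `|μ̃| ≤ Λ̄`; the diagonal
gives `|λ0| ≤ Λ̄` as well. Hence `|G0(τ,s)| ≤ Λ̄(τ+s)/4 + f̄ sτ/4 ≤ M`, using `τ + s ≤ 2` and
`sτ ≤ s(2-s) ≤ 1`. If `|H| ≤ K` on `E`, the four integrals in `Φ_H` run over a rectangle and a
triangle in `(τ,s)` and over two prisms in `(z,s,τ)`, all mapped into `E` (and `f` evaluated in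
`[0,1]²`); bounding the integrands by `Λ̄K` and `f̄K` and integrating gives the areas `η(ξ-η)`,
`η²/2` and volumes `η²(ξ-η)/2`, `η³/6`, whence the first inequality with `K = M`. The second
follows from `ξη ≤ ξ + η` and `Λ̄, f̄ ≤ 2M`.
-/

section IntervalBounds

variable {a b c C : ℝ}

lemma abs_intervalIntegral_le_mul_sub {g : ℝ → ℝ} (hab : a ≤ b)
    (hg : ∀ x ∈ Ioc a b, |g x| ≤ C) : |∫ x in a..b, g x| ≤ C * (b - a) := by
  have h := intervalIntegral.norm_integral_le_of_norm_le_const (a := a) (b := b) (f := g)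
    (by simpa only [uIoc_of_le hab, Real.norm_eq_abs] using hg)
  rwa [Real.norm_eq_abs, abs_of_nonneg (sub_nonneg.2 hab)] at h

lemma abs_intervalIntegral_le_intervalIntegral {g B : ℝ → ℝ} (hab : a ≤ b)
    (hB : Continuous B) (hg : ∀ x ∈ Ioc a b, |g x| ≤ B x) :
    |∫ x in a..b, g x| ≤ ∫ x in a..b, B x := by
  simpa only [Real.norm_eq_abs] using intervalIntegral.norm_integral_le_of_norm_le (f := g) hab
    (Filter.Eventually.of_forall (by simpa only [Real.norm_eq_abs] using hg))
    (hB.intervalIntegrable a b)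

lemma abs_integral_rect_le {g : ℝ → ℝ → ℝ} (hab : a ≤ b) (hc : 0 ≤ c)
    (hg : ∀ x ∈ Ioc a b, ∀ y ∈ Ioc 0 c, |g x y| ≤ C) :
    |∫ x in a..b, ∫ y in 0..c, g x y| ≤ C * c * (b - a) :=
  abs_intervalIntegral_le_mul_sub hab fun x hx => by
    simpa only [sub_zero] using abs_intervalIntegral_le_mul_sub hc (hg x hx)

lemma abs_integral_triangle_le {g : ℝ → ℝ → ℝ} (ha : 0 ≤ a)
    (hg : ∀ x ∈ Ioc 0 a, ∀ y ∈ Ioc 0 x, |g x y| ≤ C) :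
    |∫ x in 0..a, ∫ y in 0..x, g x y| ≤ C * (a ^ 2 / 2) := by
  refine (abs_intervalIntegral_le_intervalIntegral (B := fun x => C * x) ha (by fun_prop)
    fun x hx => ?_).trans_eq ?_
  · simpa only [sub_zero] using abs_intervalIntegral_le_mul_sub hx.1.le (hg x hx)
  · rw [intervalIntegral.integral_const_mul, integral_id]
    ring

lemma abs_integral_wedge_le {g : ℝ → ℝ → ℝ} (p : ℝ) (hc : 0 ≤ c)
    (hg : ∀ y ∈ Ioc 0 c, ∀ t ∈ Ioc p (p + c - y), |g y t| ≤ C) :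
    |∫ y in 0..c, ∫ t in p..(p + c - y), g y t| ≤ C * (c ^ 2 / 2) := by
  refine (abs_intervalIntegral_le_intervalIntegral (B := fun y => C * (c - y)) hc (by fun_prop)
    fun y hy => ?_).trans_eq ?_
  · exact (abs_intervalIntegral_le_mul_sub (by linarith [hy.2]) (hg y hy)).trans_eq (by ring)
  · rw [intervalIntegral.integral_comp_sub_left (fun y => C * y), sub_self, sub_zero,
      intervalIntegral.integral_const_mul, integral_id]
    ring

end IntervalBounds

lemma Dset_subset_unitSquare : Dset ⊆ Icc 0 1 ×ˢ Icc 0 1 := fun _ ⟨h0, h1, h2⟩ =>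
  ⟨⟨h0.trans h1, h2⟩, ⟨h0, h1.trans h2⟩⟩

lemma isCompact_Dset : IsCompact Dset :=
  (isCompact_Icc.prod isCompact_Icc).of_isClosed_subset
    ((isClosed_le continuous_const continuous_snd).inter
      ((isClosed_le continuous_snd continuous_fst).inter
        (isClosed_le continuous_fst continuous_const)))
    Dset_subset_unitSquare

lemma mk_mem_Eset {τ s : ℝ} (h0 : 0 ≤ s) (hsτ : s ≤ τ) (hτ : τ ≤ 2 - s) : (τ, s) ∈ Eset :=
  ⟨h0, by linarith, hsτ, hτ⟩

section Bounds

variable {lam0 : ℝ} {c1 : ℝ → ℝ} {f : ℝ → ℝ → ℝ}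

lemma abs_le_fbar (hf : ContinuousOn (fun p : ℝ × ℝ => f p.1 p.2) (Icc 0 1 ×ˢ Icc 0 1))
    {x y : ℝ} (hx : x ∈ Icc (0 : ℝ) 1) (hy : y ∈ Icc (0 : ℝ) 1) : |f x y| ≤ fbar f :=
  le_csSup ((isCompact_Icc.prod isCompact_Icc).image_of_continuousOn hf.abs).bddAbove
    ⟨(x, y), ⟨hx, hy⟩, rfl⟩

lemma fbar_nonneg (hf : ContinuousOn (fun p : ℝ × ℝ => f p.1 p.2) (Icc 0 1 ×ˢ Icc 0 1)) :
    0 ≤ fbar f :=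
  (abs_nonneg _).trans (abs_le_fbar hf (left_mem_Icc.2 zero_le_one) (left_mem_Icc.2 zero_le_one))

lemma abs_sub_add_le_Lambdabar (hc1 : ContinuousOn c1 (Icc 0 1)) {p : ℝ × ℝ} (hp : p ∈ Dset) :
    |lam0 - c1 p.1 + c1 p.2| ≤ Lambdabar lam0 c1 := by
  have hcont : ContinuousOn (fun p : ℝ × ℝ => |lam0 - c1 p.1 + c1 p.2|) Dset :=
    ((continuousOn_const.sub
      (hc1.comp continuousOn_fst fun _ hq => (Dset_subset_unitSquare hq).1)).add
        (hc1.comp continuousOn_snd fun _ hq => (Dset_subset_unitSquare hq).2)).abs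
  exact (le_csSup (isCompact_Dset.image_of_continuousOn hcont).bddAbove ⟨p, hp, rfl⟩).trans
    (le_max_right _ _)

lemma abs_le_Lambdabar (hc1 : ContinuousOn c1 (Icc 0 1)) : |lam0| ≤ Lambdabar lam0 c1 := by
  simpa using
    abs_sub_add_le_Lambdabar (lam0 := lam0) hc1 (p := (0, 0)) ⟨le_rfl, le_rfl, zero_le_one⟩

lemma Lambdabar_nonneg (hc1 : ContinuousOn c1 (Icc 0 1)) : 0 ≤ Lambdabar lam0 c1 :=
  (abs_nonneg _).trans (abs_le_Lambdabar hc1)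

lemma abs_mutld_le_Lambdabar (hc1 : ContinuousOn c1 (Icc 0 1)) {τ s : ℝ} (h : (τ, s) ∈ Eset) :
    |mutld lam0 c1 τ s| ≤ Lambdabar lam0 c1 := by
  obtain ⟨h0, -, hsτ, hτ⟩ := h
  exact abs_sub_add_le_Lambdabar hc1 (p := ((τ + s) / 2, (τ - s) / 2))
    ⟨by simp only; linarith, by simp only; linarith, by simp only; linarith⟩

lemma abs_Gzero_le_Mconst (hc1 : ContinuousOn c1 (Icc 0 1))
    (hf : ContinuousOn (fun p : ℝ × ℝ => f p.1 p.2) (Icc 0 1 ×ˢ Icc 0 1))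
    {τ s : ℝ} (h : (τ, s) ∈ Eset) :
    |Gzero lam0 f τ s| ≤ Mconst lam0 c1 f := by
  obtain ⟨h0, h1, hsτ, hτ⟩ : 0 ≤ s ∧ s ≤ 1 ∧ s ≤ τ ∧ τ ≤ 2 - s := h
  have hA : |∫ t in s..τ, ∫ u in (0:ℝ)..s, f ((t + u) / 2) ((t - u) / 2)|
      ≤ fbar f * s * (τ - s) := abs_integral_rect_le hsτ h0 fun t ht u hu =>
    abs_le_fbar hf ⟨by linarith [ht.1, hu.1], by linarith [ht.2, hu.2]⟩
      ⟨by linarith [ht.1, hu.2], by linarith [ht.2, hu.1]⟩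
  have hB : |∫ t in (0:ℝ)..s, ∫ u in (0:ℝ)..t, f ((t + u) / 2) ((t - u) / 2)|
      ≤ fbar f * (s ^ 2 / 2) := abs_integral_triangle_le h0 fun t ht u hu =>
    abs_le_fbar hf ⟨by linarith [ht.1, hu.1], by linarith [ht.2, hu.2]⟩
      ⟨by linarith [hu.2], by linarith [ht.2, hu.1]⟩
  have hlam := abs_le_Lambdabar (lam0 := lam0) hc1
  have hF := fbar_nonneg hf
  calc |Gzero lam0 f τ s|
      ≤ |lam0| / 4 * (τ + s)
        + 1 / 4 * |∫ t in s..τ, ∫ u in (0:ℝ)..s, f ((t + u) / 2) ((t - u) / 2)|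
        + 1 / 2 * |∫ t in (0:ℝ)..s, ∫ u in (0:ℝ)..t, f ((t + u) / 2) ((t - u) / 2)| := by
        refine (norm_add₃_le (E := ℝ)).trans_eq ?_
        simp only [Real.norm_eq_abs, abs_mul, abs_div, abs_of_nonneg (by linarith : 0 ≤ τ + s)]
        norm_num
    _ ≤ Lambdabar lam0 c1 / 4 * (τ + s) + fbar f * (s * τ) / 4 := by nlinarith
    _ ≤ Mconst lam0 c1 f := by
        have hτs : 0 ≤ 2 - s - τ := by linarith
        unfold Mconst
        nlinarith [mul_nonneg (Lambdabar_nonneg (lam0 := lam0) hc1) hτs,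
          mul_nonneg (mul_nonneg hF h0) hτs, mul_nonneg hF (sq_nonneg (1 - s))]

lemma abs_mutld_mul_le (hc1 : ContinuousOn c1 (Icc 0 1)) {H : ℝ → ℝ → ℝ} {K : ℝ}
    (hH : ∀ p ∈ Eset, |H p.1 p.2| ≤ K) {τ s : ℝ} (h : (τ, s) ∈ Eset) :
    |mutld lam0 c1 τ s * H τ s| ≤ Lambdabar lam0 c1 * K := by
  rw [abs_mul]
  exact mul_le_mul (abs_mutld_le_Lambdabar hc1 h) (hH _ h) (abs_nonneg _) (Lambdabar_nonneg hc1)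

-- The two prisms of `Φ_H` are the cases `c = η ≤ z` and `c = z`.
lemma abs_f_mul_le (hf : ContinuousOn (fun p : ℝ × ℝ => f p.1 p.2) (Icc 0 1 ×ˢ Icc 0 1))
    {H : ℝ → ℝ → ℝ} {K : ℝ} (hH : ∀ p ∈ Eset, |H p.1 p.2| ≤ K)
    {z c s τ : ℝ} (hcz : c ≤ z) (hzc : z + c ≤ 2) (hs : s ∈ Ioc 0 c)
    (hτ : τ ∈ Ioc z (z + c - s)) :
    |f ((τ - s) / 2) (z - (τ + s) / 2) * H τ s| ≤ fbar f * K := by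
  obtain ⟨hs0, hsc⟩ := hs
  obtain ⟨hzτ, hτc⟩ := hτ
  have hmem : (τ, s) ∈ Eset := mk_mem_Eset hs0.le (by linarith) (by linarith)
  rw [abs_mul]
  exact mul_le_mul (abs_le_fbar hf ⟨by linarith, by linarith⟩ ⟨by linarith, by linarith⟩)
    (hH _ hmem) (abs_nonneg _) (fbar_nonneg hf)

lemma abs_Phi_le (hc1 : ContinuousOn c1 (Icc 0 1))
    (hf : ContinuousOn (fun p : ℝ × ℝ => f p.1 p.2) (Icc 0 1 ×ˢ Icc 0 1))
    {H : ℝ → ℝ → ℝ} {K : ℝ} (hH : ∀ p ∈ Eset, |H p.1 p.2| ≤ K)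
    {xi eta : ℝ} (hE : (xi, eta) ∈ Eset) :
    |Phi lam0 c1 f H xi eta| ≤ K * (Lambdabar lam0 c1 * xi * eta / 4
      + fbar f * xi * eta ^ 2 / 8 - fbar f * eta ^ 3 / 24) := by
  obtain ⟨he0, -, hex, hx2⟩ : 0 ≤ eta ∧ eta ≤ 1 ∧ eta ≤ xi ∧ xi ≤ 2 - eta := hE
  have hμH {τ s : ℝ} (h0 : 0 ≤ s) (hsτ : s ≤ τ) (hτ : τ ≤ 2 - s) :=
    abs_mutld_mul_le (lam0 := lam0) hc1 hH (mk_mem_Eset h0 hsτ hτ)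
  unfold Phi
  refine (norm_add₄_le (E := ℝ)).trans ?_
  simp only [Real.norm_eq_abs, abs_mul, abs_div, abs_one, abs_two,
    show |(4 : ℝ)| = 4 by norm_num]
  calc _ ≤ 1 / 4 * (Lambdabar lam0 c1 * K * eta * (xi - eta))
        + 1 / 2 * (Lambdabar lam0 c1 * K * (eta ^ 2 / 2))
        + 1 / 4 * (fbar f * K * (eta ^ 2 / 2) * (xi - eta))
        + 1 / 2 * ∫ z in (0:ℝ)..eta, fbar f * K * (z ^ 2 / 2) := by
        gcongr 1 / 4 * ?_ + 1 / 2 * ?_ + 1 / 4 * ?_ + 1 / 2 * ?_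
        · exact abs_integral_rect_le hex he0 fun τ hτ s hs =>
            hμH hs.1.le (hs.2.trans hτ.1.le) (by linarith [hτ.2, hs.2])
        · exact abs_integral_triangle_le he0 fun τ hτ s hs =>
            hμH hs.1.le hs.2 (by linarith [hτ.2, hs.2])
        · exact abs_intervalIntegral_le_mul_sub hex fun z hz =>
            abs_integral_wedge_le z he0 fun s hs τ hτ =>
              abs_f_mul_le hf hH hz.1.le (by linarith [hz.2]) hs hτ
        · refine abs_intervalIntegral_le_intervalIntegral he0 (by fun_prop) fun z hz => ?_
          rw [two_mul]
          exact abs_integral_wedge_le z hz.1.le fun s hs τ hτ =>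
            abs_f_mul_le hf hH le_rfl (by linarith [hz.2]) hs hτ
    _ = _ := by
        rw [intervalIntegral.integral_const_mul, intervalIntegral.integral_div, integral_pow]
        ring

lemma Mconst_mul_le_sq_mul (hc1 : ContinuousOn c1 (Icc 0 1))
    (hf : ContinuousOn (fun p : ℝ × ℝ => f p.1 p.2) (Icc 0 1 ×ˢ Icc 0 1))
    {xi eta : ℝ} (hE : (xi, eta) ∈ Eset) :
    Mconst lam0 c1 f * (Lambdabar lam0 c1 * xi * eta / 4
        + fbar f * xi * eta ^ 2 / 8 - fbar f * eta ^ 3 / 24) ≤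
      Mconst lam0 c1 f ^ 2 * (xi + eta) := by
  obtain ⟨he0, he1, hex, -⟩ : 0 ≤ eta ∧ eta ≤ 1 ∧ eta ≤ xi ∧ xi ≤ 2 - eta := hE
  have hF := fbar_nonneg hf
  have hL := Lambdabar_nonneg (lam0 := lam0) hc1
  have hM : 0 ≤ Mconst lam0 c1 f := by unfold Mconst; positivity
  have hx0 : 0 ≤ xi := he0.trans hex
  have hP : Lambdabar lam0 c1 * xi * eta / 4 + fbar f * xi * eta ^ 2 / 8
      - fbar f * eta ^ 3 / 24 ≤ Mconst lam0 c1 f * (xi + eta) := by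
    unfold Mconst
    nlinarith [mul_nonneg (mul_nonneg hL hx0) (sub_nonneg.2 he1), mul_nonneg hL he0,
      mul_nonneg (mul_nonneg hF hx0) (sub_nonneg.2 (pow_le_one₀ he0 he1 : eta ^ 2 ≤ 1)),
      mul_nonneg hF (pow_nonneg he0 3), mul_nonneg hF he0]
  calc _ ≤ Mconst lam0 c1 f * (Mconst lam0 c1 f * (xi + eta)) :=
        mul_le_mul_of_nonneg_left hP hM
    _ = _ := by ring

end Bounds

theorem Phi_Gzero_bound_general (lam0 : ℝ)
    (c1 : ℝ → ℝ) (hc1 : ContinuousOn c1 (Icc 0 1))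
    (f : ℝ → ℝ → ℝ)
    (hf : ContinuousOn (fun p : ℝ × ℝ => f p.1 p.2) (Icc 0 1 ×ˢ Icc 0 1)) :
    ∀ xi eta : ℝ, (xi, eta) ∈ Eset →
      |Phi lam0 c1 f (Gzero lam0 f) xi eta| ≤
          Mconst lam0 c1 f * (Lambdabar lam0 c1 * xi * eta / 4
            + fbar f * xi * eta ^ 2 / 8 - fbar f * eta ^ 3 / 24) ∧
        Mconst lam0 c1 f * (Lambdabar lam0 c1 * xi * eta / 4
            + fbar f * xi * eta ^ 2 / 8 - fbar f * eta ^ 3 / 24) ≤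
          Mconst lam0 c1 f ^ 2 * (xi + eta) :=
  fun _ _ hE => ⟨abs_Phi_le hc1 hf (fun _ hp => abs_Gzero_le_Mconst hc1 hf hp) hE,
    Mconst_mul_le_sq_mul hc1 hf hE⟩

/-- Bound on `Φ_(G0)`:
`|Φ_(G0)(ξ,η)| ≤ M(Λ̄ξη/4 + f̄ξη²/8 - f̄η³/24) ≤ M²(ξ+η)` on `E`. -/
theorem Phi_Gzero_bound (lam0 : ℝ) (hlam0 : 0 < lam0)
    (c1 : ℝ → ℝ) (hc1 : ContinuousOn c1 (Icc 0 1))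
    (f : ℝ → ℝ → ℝ)
    (hf : ContinuousOn (fun p : ℝ × ℝ => f p.1 p.2) (Icc 0 1 ×ˢ Icc 0 1)) :
    ∀ xi eta : ℝ, (xi, eta) ∈ Eset →
      |Phi lam0 c1 f (Gzero lam0 f) xi eta| ≤
          Mconst lam0 c1 f * (Lambdabar lam0 c1 * xi * eta / 4
            + fbar f * xi * eta ^ 2 / 8 - fbar f * eta ^ 3 / 24) ∧
        Mconst lam0 c1 f * (Lambdabar lam0 c1 * xi * eta / 4
            + fbar f * xi * eta ^ 2 / 8 - fbar f * eta ^ 3 / 24) ≤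
          Mconst lam0 c1 f ^ 2 * (xi + eta) :=
  Phi_Gzero_bound_general lam0 c1 hc1 f hf
end
end
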